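/- Let G = ℤ_{p^{t₁}} × ℤ_{p^{t₂}} × ⋯ × ℤ_{p^{t_r}} with r ≥ 2 be a finite non-cyclic abelian p-group. Then the number of connected components of the enhanced power graph of G with the identity removed equals (p^r − 1)/(p − 1). -/

import Mathlib

/-- The enhanced power graph of a group `G`: vertices are elements of `G`,
with distinct `u`, `v` adjacent iff both are powers of a common element. -/
def enhancedPowerGraph (G : Type*) [Group G] : SimpleGraph G where
  Adj u v := u ≠ v ∧ ∃ w : G, u ∈ Subgroup.zpowers w ∧ v ∈ Subgroup.zpowers w
  symm := by
    constructor
    rintro u v ⟨h, w, hu, hv⟩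
    exact ⟨h.symm, w, hv, hu⟩
  loopless := by
    constructor
    rintro u ⟨h, -⟩
    exact h rfl

/-- A dominating vertex: adjacent to every other vertex. -/
def IsDominating {V : Type*} (Γ : SimpleGraph V) (v : V) : Prop :=
  ∀ u, u ≠ v → Γ.Adj v u

/-- The vertex connectivity: the least size of a set of vertices whose removal
leaves a graph that is not connected. -/
noncomputable def vertexConnectivity {V : Type*} (Γ : SimpleGraph V) : ℕ :=
  sInf {n | ∃ s : Set V, s.ncard = n ∧ ¬ (Γ.induce sᶜ).Connected}

/-!
In a finite `p`-group every nontrivial cyclic subgroup `⟨g⟩` contains exactly one subgroup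
of order `p`, namely `⟨g ^ (|g| / p)⟩`. Adjacent vertices of the enhanced power graph lie in
a common cyclic subgroup, so this subgroup is constant on connected components; conversely,
`g` and `g ^ (|g| / p)` lie in `⟨g⟩`, so vertices with the same subgroup of order `p` are
joined by a path of length at most two. Hence the components correspond to the subgroups of
order `p`, each of which accounts for `p - 1` elements of order `p`. In `∏ ℤ/p^tᵢ` the
solutions of `x ^ p = 1` form `(ℤ/p)ʳ`, so there are `p ^ r - 1` elements of order `p`.
-/

open Subgroup

section

variable {G : Type*} [Group G]

abbrev reducedEnhancedPowerGraph (G : Type*) [Group G] : SimpleGraph {g : G | g ≠ 1} :=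
  (enhancedPowerGraph G).induce {g | g ≠ 1}

theorem reducedEnhancedPowerGraph_reachable_of_mem_zpowers {u v : {g : G | g ≠ 1}} {w : G}
    (hu : u.1 ∈ zpowers w) (hv : v.1 ∈ zpowers w) :
    (reducedEnhancedPowerGraph G).Reachable u v := by
  by_cases huv : u = v
  · exact huv ▸ SimpleGraph.Reachable.refl u
  · exact SimpleGraph.Adj.reachable ⟨fun h => huv (Subtype.ext h), w, hu, hv⟩

theorem zpowers_eq_zpowers_pow_of_mem_zpowers [Finite G] {x w : G} (hx : x ∈ zpowers w) :
    zpowers x = zpowers (w ^ (orderOf w / orderOf x)) := by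
  have hdvd : orderOf x ∣ orderOf w := orderOf_dvd_of_mem_zpowers hx
  obtain ⟨a, ha⟩ := mem_powers_iff_mem_zpowers.mpr hx
  replace ha : w ^ a = x := ha
  have hquot : orderOf w / orderOf x ∣ a := by
    refine Nat.dvd_of_mul_dvd_mul_right (orderOf_pos x) ?_
    rw [Nat.div_mul_cancel hdvd]
    exact orderOf_dvd_of_pow_eq_one (by rw [pow_mul, ha, pow_orderOf_eq_one])
  obtain ⟨b, hb⟩ := hquot
  refine Subgroup.eq_of_le_of_card_ge (zpowers_le.mpr ?_) ?_
  · have hmem := pow_mem (mem_zpowers (w ^ (orderOf w / orderOf x))) b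
    rwa [← pow_mul, ← hb, ha] at hmem
  · rw [Nat.card_zpowers, Nat.card_zpowers,
      orderOf_pow_orderOf_div (orderOf_pos w).ne' hdvd]

theorem zpowers_eq_of_mem_zpowers_of_orderOf_eq [Finite G] {x y w : G} (hx : x ∈ zpowers w)
    (hy : y ∈ zpowers w) (hxy : orderOf x = orderOf y) : zpowers x = zpowers y := by
  rw [zpowers_eq_zpowers_pow_of_mem_zpowers hx, zpowers_eq_zpowers_pow_of_mem_zpowers hy, hxy]

section Prime

variable [Finite G] {p : ℕ} [hp : Fact p.Prime]

theorem card_orderOf_eq_prime_add_one :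
    Nat.card {x : G // orderOf x = p} + 1 = Nat.card {x : G // x ^ p = 1} := by
  have hset : {x : G | orderOf x = p} = {x : G | x ^ p = 1} \ {1} := by
    ext x
    simp [orderOf_eq_prime_iff]
  rw [← Set.coe_ofPred, ← Set.coe_ofPred, Nat.card_coe_set_eq, Nat.card_coe_set_eq, hset]
  exact Set.ncard_sdiff_singleton_add_one (by simp)

theorem zpowers_eq_iff_of_card_eq_prime {H : Subgroup G} (hH : Nat.card H = p) {x : G} :
    zpowers x = H ↔ x ∈ H ∧ x ≠ 1 := by
  constructor
  · rintro rfl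
    refine ⟨mem_zpowers x, fun h1 => ?_⟩
    rw [h1, zpowers_one_eq_bot, card_bot] at hH
    exact hp.out.one_lt.ne hH
  · rintro ⟨hxH, hx1⟩
    have hx : orderOf x = p := by
      rcases (Nat.dvd_prime hp.out).mp (hH ▸ Subgroup.orderOf_dvd_natCard H hxH) with h | h
      · exact absurd (orderOf_eq_one_iff.mp h) hx1
      · exact h
    exact Subgroup.eq_of_le_of_card_ge (zpowers_le.mpr hxH) (by rw [Nat.card_zpowers, hx, hH])

theorem card_zpowers_eq_of_card_eq_prime {H : Subgroup G} (hH : Nat.card H = p) :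
    Nat.card {x : G // zpowers x = H} = p - 1 := by
  have hset : {x : G | zpowers x = H} = (H : Set G) \ {1} := by
    ext x
    simp [zpowers_eq_iff_of_card_eq_prime hH]
  rw [← Set.coe_ofPred, Nat.card_coe_set_eq, hset, Set.ncard_sdiff_singleton_of_mem H.one_mem,
    ← Nat.card_coe_set_eq, SetLike.coe_sort_coe, hH]

theorem card_orderOf_eq_prime_eq_mul :
    Nat.card {x : G // orderOf x = p} =
      Nat.card {H : Subgroup G // Nat.card H = p} * (p - 1) := by
  let f : {x : G // orderOf x = p} → {H : Subgroup G // Nat.card H = p} :=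
    fun x => ⟨zpowers x, by rw [Nat.card_zpowers, x.2]⟩
  have hfiber : ∀ H, Nat.card {x // f x = H} = p - 1 := fun H => by
    rw [← card_zpowers_eq_of_card_eq_prime H.2]
    refine Nat.card_congr ((Equiv.subtypeEquivRight fun x => Subtype.ext_iff).trans
      (Equiv.subtypeSubtypeEquivSubtype (p := fun x : G => orderOf x = p)
        (q := fun x : G => zpowers x = H) fun {x} hx => ?_))
    rw [← Nat.card_zpowers, hx, H.2]
  have := Fintype.ofFinite {H : Subgroup G // Nat.card H = p}
  rw [← Nat.card_congr (Equiv.sigmaFiberEquiv f), Nat.card_sigma]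
  simp [hfiber]

end Prime

end

theorem SimpleGraph.Reachable.eq_of_forall_adj {V β : Type*} {Γ : SimpleGraph V} (f : V → β)
    (hf : ∀ u v, Γ.Adj u v → f u = f v) {u v : V} (h : Γ.Reachable u v) : f u = f v := by
  obtain ⟨walk⟩ := h
  induction walk with
  | nil => rfl
  | cons hadj _ ih => exact (hf _ _ hadj).trans ih

namespace IsPGroup

variable {G : Type*} [Group G] [Finite G] {p : ℕ} [hp : Fact p.Prime]

theorem orderOf_pow_orderOf_div (hG : IsPGroup p G) {g : G} (hg : g ≠ 1) :
    orderOf (g ^ (orderOf g / p)) = p :=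
  _root_.orderOf_pow_orderOf_div (orderOf_pos g).ne' (hG.dvd_orderOf hg)

theorem zpowers_pow_orderOf_div_eq_of_mem_zpowers (hG : IsPGroup p G) {g h w : G}
    (hg : g ≠ 1) (hh : h ≠ 1) (hgw : g ∈ zpowers w) (hhw : h ∈ zpowers w) :
    zpowers (g ^ (orderOf g / p)) = zpowers (h ^ (orderOf h / p)) :=
  zpowers_eq_of_mem_zpowers_of_orderOf_eq (zpowers_le.mpr hgw (npow_mem_zpowers g _))
    (zpowers_le.mpr hhw (npow_mem_zpowers h _))
    (by rw [hG.orderOf_pow_orderOf_div hg, hG.orderOf_pow_orderOf_div hh])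

theorem reachable_of_zpowers_pow_orderOf_div_eq (hG : IsPGroup p G) {u v : {g : G | g ≠ 1}}
    (huv : zpowers (u.1 ^ (orderOf u.1 / p)) = zpowers (v.1 ^ (orderOf v.1 / p))) :
    (reducedEnhancedPowerGraph G).Reachable u v := by
  have hsocle_ne_one : u.1 ^ (orderOf u.1 / p) ≠ 1 :=
    (orderOf_eq_prime_iff.mp (hG.orderOf_pow_orderOf_div u.2)).2
  let socle : {g : G | g ≠ 1} := ⟨_, hsocle_ne_one⟩
  have hsocle_mem : socle.1 ∈ zpowers v.1 :=
    zpowers_le.mpr (npow_mem_zpowers v.1 _) (huv ▸ mem_zpowers socle.1)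
  exact (reducedEnhancedPowerGraph_reachable_of_mem_zpowers (mem_zpowers u.1)
    (npow_mem_zpowers u.1 _)).trans
    (reducedEnhancedPowerGraph_reachable_of_mem_zpowers hsocle_mem (mem_zpowers v.1))

theorem card_connectedComponent_reducedEnhancedPowerGraph (hG : IsPGroup p G) :
    Nat.card (reducedEnhancedPowerGraph G).ConnectedComponent =
      Nat.card {H : Subgroup G // Nat.card H = p} := by
  let socle (g : {g : G | g ≠ 1}) : {H : Subgroup G // Nat.card H = p} :=
    ⟨zpowers (g.1 ^ (orderOf g.1 / p)),
      by rw [Nat.card_zpowers, hG.orderOf_pow_orderOf_div g.2]⟩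
  have hadj : ∀ u v, (reducedEnhancedPowerGraph G).Adj u v → socle u = socle v := by
    rintro u v ⟨-, w, hu, hv⟩
    exact Subtype.ext (hG.zpowers_pow_orderOf_div_eq_of_mem_zpowers u.2 v.2 hu hv)
  refine Nat.card_eq_of_bijective (SimpleGraph.ConnectedComponent.lift socle
    fun u v walk _ => walk.reachable.eq_of_forall_adj socle hadj) ⟨?_, ?_⟩
  · refine SimpleGraph.ConnectedComponent.ind₂ fun u v huv => ?_
    exact SimpleGraph.ConnectedComponent.sound
      (hG.reachable_of_zpowers_pow_orderOf_div_eq (congrArg Subtype.val huv))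
  · rintro ⟨H, hH⟩
    obtain ⟨g, hgH, hg1⟩ := (H.bot_or_exists_ne_one).resolve_left fun hbot => by
      rw [hbot, card_bot] at hH
      exact hp.out.ne_one hH.symm
    have hgen : zpowers g = H := (zpowers_eq_iff_of_card_eq_prime hH).mpr ⟨hgH, hg1⟩
    have hg : orderOf g = p := by rw [← Nat.card_zpowers, hgen, hH]
    refine ⟨(reducedEnhancedPowerGraph G).connectedComponentMk ⟨g, hg1⟩, Subtype.ext ?_⟩
    change zpowers (g ^ (orderOf g / p)) = H
    rw [hg, Nat.div_self hp.out.pos, pow_one, hgen]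

end IsPGroup

theorem card_pi_pow_eq_one {ι : Type*} [Fintype ι] {G : ι → Type*} [∀ i, Group (G i)]
    (n : ℕ) :
    Nat.card {x : ∀ i, G i // x ^ n = 1} = ∏ i, Nat.card {y : G i // y ^ n = 1} := by
  rw [← Nat.card_pi]
  refine Nat.card_congr ((Equiv.subtypeEquivRight fun x => ?_).trans Equiv.subtypePiEquivPi)
  simp only [funext_iff, Pi.pow_apply, Pi.one_apply]

theorem IsCyclic.card_pow_eq_one {G : Type*} [CommGroup G] [IsCyclic G] [Finite G] (n : ℕ) :
    Nat.card {x : G // x ^ n = 1} = (Nat.card G).gcd n :=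
  IsCyclic.card_powMonoidHom_ker G n

theorem stmt_12_general {p : ℕ} (hp : p.Prime) (r : ℕ)
    (t : Fin r → ℕ) (ht : ∀ i, 1 ≤ t i) :
    Nat.card ((enhancedPowerGraph
        ((i : Fin r) → Multiplicative (ZMod (p ^ t i)))).induce
          {g | g ≠ 1}).ConnectedComponent = (p ^ r - 1) / (p - 1) := by
  have := Fact.mk hp
  have hcard (i : Fin r) : Nat.card (Multiplicative (ZMod (p ^ t i))) = p ^ t i := by
    rw [Nat.card_congr Multiplicative.toAdd, Nat.card_zmod]
  have hG : IsPGroup p ((i : Fin r) → Multiplicative (ZMod (p ^ t i))) :=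
    IsPGroup.of_card (n := ∑ i, t i) <| by
      simp only [Nat.card_pi, hcard, Finset.prod_pow_eq_pow_sum]
  have hfactor (i : Fin r) : Nat.card {y : Multiplicative (ZMod (p ^ t i)) // y ^ p = 1} = p := by
    rw [IsCyclic.card_pow_eq_one, hcard,
      Nat.gcd_eq_right (dvd_pow_self p (Nat.one_le_iff_ne_zero.mp (ht i)))]
  have hcount := card_orderOf_eq_prime_add_one (p := p)
    (G := (i : Fin r) → Multiplicative (ZMod (p ^ t i)))
  rw [card_orderOf_eq_prime_eq_mul, ← hG.card_connectedComponent_reducedEnhancedPowerGraph,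
    card_pi_pow_eq_one, Finset.prod_congr rfl fun i _ => hfactor i, Finset.prod_const,
    Finset.card_univ, Fintype.card_fin] at hcount
  rw [← hcount, Nat.add_sub_cancel, Nat.mul_div_cancel _ (Nat.sub_pos_of_lt hp.one_lt)]

theorem stmt_12 {p : ℕ} (hp : p.Prime) (r : ℕ) (hr : 2 ≤ r)
    (t : Fin r → ℕ) (ht : ∀ i, 1 ≤ t i) :
    Nat.card ((enhancedPowerGraph
        ((i : Fin r) → Multiplicative (ZMod (p ^ t i)))).induce
          {g | g ≠ 1}).ConnectedComponent = (p ^ r - 1) / (p - 1) :=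
  stmt_12_general hp r t ht
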